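/- arXiv:math/0703886 — 3 statements merged into one kernel-verified Lean document; each statement's English description precedes it below -/
import Mathlib

section
/- Let G be a group with subgroups H, K, G = HK, S = H ∩ K. Fix a set I of coset representatives of K/S (one representative per left coset kS). Define h ▷'_I (k_i s) := k_j s where k_j is the unique element of I in the coset h ▷' (k_i S) (the action of H on K/S). Then ▷'_I is a left action of H on the set K satisfying: h ▷'_I (k s) = (h ▷'_I k) s for all k ∈ K, s ∈ S, and h ▷'_I s = s for all s ∈ S. -/
/-- The extension `▷'_I` of the `H`-action on `K/S` to an action of `H` on the set `K`,
via a transversal `I` of `K/S`. -/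
theorem stmt_6 {G : Type*} [Group G] (H K : Subgroup G)
    (hHK : ∀ g : G, ∃ h ∈ H, ∃ k ∈ K, g = h * k)
    (I : Set G) (hI : I ⊆ ↑K)
    (htrans : ∀ k ∈ K, ∃! i, i ∈ I ∧ ∃ s ∈ H ⊓ K, k = i * s)
    (f : G → G → G)
    (hf : ∀ h ∈ H, ∀ i ∈ I, ∀ s ∈ H ⊓ K,
      ∃ j ∈ I, f h (i * s) = j * s ∧ ∃ s' ∈ H ⊓ K, ∃ h' ∈ H, h * i = j * s' * h') :
    (∀ k ∈ K, f 1 k = k) ∧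
    (∀ h ∈ H, ∀ h' ∈ H, ∀ k ∈ K, f h (f h' k) = f (h * h') k) ∧
    (∀ h ∈ H, ∀ k ∈ K, ∀ s ∈ H ⊓ K, f h (k * s) = f h k * s) ∧
    (∀ h ∈ H, ∀ s ∈ H ⊓ K, f h s = s) := by
  have hSH : ∀ s ∈ H ⊓ K, s ∈ H := fun s hs => (Subgroup.mem_inf.mp hs).1
  have hSK : ∀ s ∈ H ⊓ K, s ∈ K := fun s hs => (Subgroup.mem_inf.mp hs).2
  -- uniqueness of transversal representative
  have uniq : ∀ i ∈ I, ∀ j ∈ I, j⁻¹ * i ∈ H ⊓ K → i = j := by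
    intro i hi j hj hmem
    obtain ⟨u, _, hu⟩ := htrans i (hI hi)
    have h1 : i = u := hu i ⟨hi, 1, one_mem _, (mul_one i).symm⟩
    have h2 : j = u := hu j ⟨hj, j⁻¹ * i, hmem, by group⟩
    exact h1.trans h2.symm
  -- uniqueness of the `I`-component of an element of the form j * s * h'
  have main : ∀ g : G, ∀ j ∈ I, ∀ j' ∈ I,
      (∃ s ∈ H ⊓ K, ∃ h' ∈ H, g = j * s * h') →
      (∃ s ∈ H ⊓ K, ∃ h' ∈ H, g = j' * s * h') → j = j' := by
    intro g j hj j' hj' ⟨s, hs, h', hh', e1⟩ ⟨s2, hs2, h2, hh2, e2⟩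
    apply uniq j hj j' hj'
    have e3 : j'⁻¹ * j = (j'⁻¹ * (j * s * h')) * h'⁻¹ * s⁻¹ := by group
    rw [← e1, e2] at e3
    have e4 : j'⁻¹ * j = s2 * h2 * h'⁻¹ * s⁻¹ := by rw [e3]; group
    refine Subgroup.mem_inf.mpr ⟨?_, mul_mem (inv_mem (hI hj')) (hI hj)⟩
    rw [e4]
    exact mul_mem (mul_mem (mul_mem (hSH s2 hs2) hh2) (inv_mem hh'))
      (inv_mem (hSH s hs))
  refine ⟨?_, ?_, ?_, ?_⟩
  · -- f 1 k = k
    intro k hk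
    obtain ⟨i, ⟨hi, s, hs, hks⟩, -⟩ := htrans k hk
    obtain ⟨j, hjI, hfj, s', hs', h', hh', heq⟩ := hf 1 (one_mem H) i hi s hs
    have hji : j = i := main (1 * i) j hjI i hi ⟨s', hs', h', hh', heq⟩
      ⟨1, one_mem _, 1, one_mem _, by group⟩
    rw [hks, hfj, hji]
  · -- compatibility
    intro h hh h' hh' k hk
    obtain ⟨i, ⟨hi, s, hs, hks⟩, -⟩ := htrans k hk
    obtain ⟨j, hjI, hfj, s1, hs1, h1, hh1, e1⟩ := hf h' hh' i hi s hs
    obtain ⟨j2, hj2I, hfj2, s2, hs2, h2, hh2, e2⟩ := hf h hh j hjI s hs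
    obtain ⟨j3, hj3I, hfj3, s3, hs3, h3, hh3, e3⟩ := hf (h * h') (mul_mem hh hh') i hi s hs
    have hkey : h * h' * i = j2 * s2 * (h2 * s1 * h1) := by
      calc h * h' * i = h * (h' * i) := by group
      _ = h * (j * s1 * h1) := by rw [e1]
      _ = (h * j) * s1 * h1 := by group
      _ = (j2 * s2 * h2) * s1 * h1 := by rw [e2]
      _ = j2 * s2 * (h2 * s1 * h1) := by group
    have hj23 : j3 = j2 := main (h * h' * i) j3 hj3I j2 hj2I
      ⟨s3, hs3, h3, hh3, e3⟩
      ⟨s2, hs2, h2 * s1 * h1, mul_mem (mul_mem hh2 (hSH s1 hs1)) hh1, hkey⟩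
    rw [hks, hfj, hfj2, hfj3, hj23]
  · -- f h (k * s) = f h k * s
    intro h hh k hk s hs
    obtain ⟨i, ⟨hi, t, ht, hkt⟩, -⟩ := htrans k hk
    obtain ⟨j, hjI, hfj, s1, hs1, h1, hh1, e1⟩ := hf h hh i hi t ht
    obtain ⟨j2, hj2I, hfj2, s2, hs2, h2, hh2, e2⟩ :=
      hf h hh i hi (t * s) (mul_mem ht hs)
    have hjj : j2 = j := main (h * i) j2 hj2I j hjI
      ⟨s2, hs2, h2, hh2, e2⟩ ⟨s1, hs1, h1, hh1, e1⟩
    have : k * s = i * (t * s) := by rw [hkt]; group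
    rw [this, hfj2, hjj, hkt, hfj]
    group
  · -- f h s = s
    intro h hh s hs
    obtain ⟨i, ⟨hi, t, ht, hst⟩, -⟩ := htrans s (hSK s hs)
    have hiH : i ∈ H := by
      have : i = s * t⁻¹ := by rw [hst]; group
      rw [this]; exact mul_mem (hSH s hs) (inv_mem (hSH t ht))
    obtain ⟨j, hjI, hfj, s', hs', h', hh', heq⟩ := hf h hh i hi t ht
    have hjH : j ∈ H := by
      have : j = (h * i) * h'⁻¹ * s'⁻¹ := by rw [heq]; group
      rw [this]
      exact mul_mem (mul_mem (mul_mem hh hiH) (inv_mem hh')) (inv_mem (hSH s' hs'))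
    have hji : i = j := uniq i hi j hjI
      (Subgroup.mem_inf.mpr ⟨mul_mem (inv_mem hjH) hiH,
        mul_mem (inv_mem (hI hjI)) (hI hi)⟩)
    rw [hst, hfj, ← hji]
end

section
/- Let G = HK with H, K subgroups, S = H ∩ K, and let I¹, I² be two transversals of K/S. Then the extended actions ▷'_{I¹} and ▷'_{I²} of H on K are conjugate: there is a bijection φ : K → K with φ(h ▷'_{I¹} k) = h ▷'_{I²} φ(k) for all h ∈ H, k ∈ K. -/
/-- The extended actions of `H` on `K` coming from two transversals of `K/S` are conjugate. -/
theorem stmt_7 {G : Type*} [Group G] (H K : Subgroup G)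
    (hHK : ∀ g : G, ∃ h ∈ H, ∃ k ∈ K, g = h * k)
    (I₁ I₂ : Set G) (hI₁ : I₁ ⊆ ↑K) (hI₂ : I₂ ⊆ ↑K)
    (htrans₁ : ∀ k ∈ K, ∃! i, i ∈ I₁ ∧ ∃ s ∈ H ⊓ K, k = i * s)
    (htrans₂ : ∀ k ∈ K, ∃! i, i ∈ I₂ ∧ ∃ s ∈ H ⊓ K, k = i * s)
    (f₁ f₂ : G → G → G)
    (hf₁ : ∀ h ∈ H, ∀ i ∈ I₁, ∀ s ∈ H ⊓ K,
      ∃ j ∈ I₁, f₁ h (i * s) = j * s ∧ ∃ s' ∈ H ⊓ K, ∃ h' ∈ H, h * i = j * s' * h')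
    (hf₂ : ∀ h ∈ H, ∀ i ∈ I₂, ∀ s ∈ H ⊓ K,
      ∃ j ∈ I₂, f₂ h (i * s) = j * s ∧ ∃ s' ∈ H ⊓ K, ∃ h' ∈ H, h * i = j * s' * h') :
    ∃ φ : G → G, Set.BijOn φ ↑K ↑K ∧ ∀ h ∈ H, ∀ k ∈ K, φ (f₁ h k) = f₂ h (φ k) := by
  classical
  choose! r₁ hr₁ hu₁ using htrans₁
  choose! r₂ hr₂ hu₂ using htrans₂
  -- basic facts about the representatives
  have hmem₁ : ∀ k ∈ K, r₁ k ∈ I₁ := fun k hk => (hr₁ k hk).1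
  have hmem₂ : ∀ k ∈ K, r₂ k ∈ I₂ := fun k hk => (hr₂ k hk).1
  have hS₁ : ∀ k ∈ K, (r₁ k)⁻¹ * k ∈ H ⊓ K := by
    intro k hk
    obtain ⟨s, hs, hks⟩ := (hr₁ k hk).2
    have h2 : (r₁ k)⁻¹ * k = s := inv_mul_eq_iff_eq_mul.mpr hks
    rw [h2]; exact hs
  have hS₂ : ∀ k ∈ K, (r₂ k)⁻¹ * k ∈ H ⊓ K := by
    intro k hk
    obtain ⟨s, hs, hks⟩ := (hr₂ k hk).2
    have h2 : (r₂ k)⁻¹ * k = s := inv_mul_eq_iff_eq_mul.mpr hks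
    rw [h2]; exact hs
  have rep₁ : ∀ i ∈ I₁, ∀ s ∈ H ⊓ K, r₁ (i * s) = i := by
    intro i hi s hs
    exact (hu₁ (i * s) (mul_mem (hI₁ hi) (Subgroup.mem_inf.mp hs).2) i ⟨hi, s, hs, rfl⟩).symm
  have rep₂ : ∀ i ∈ I₂, ∀ s ∈ H ⊓ K, r₂ (i * s) = i := by
    intro i hi s hs
    exact (hu₂ (i * s) (mul_mem (hI₂ hi) (Subgroup.mem_inf.mp hs).2) i ⟨hi, s, hs, rfl⟩).symm
  -- the cross uniqueness lemma for I₂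
  have cross₂ : ∀ j ∈ I₂, ∀ j' ∈ I₂, ∀ σ ∈ H ⊓ K, ∀ η ∈ H, j' = j * σ * η → j' = j := by
    intro j hj j' hj' σ hσ η hη heq
    have hηK : η ∈ K := by
      have : η = σ⁻¹ * j⁻¹ * j' := by rw [heq]; group
      rw [this]
      exact mul_mem (mul_mem (inv_mem (Subgroup.mem_inf.mp hσ).2) (inv_mem (hI₂ hj)))
        (hI₂ hj')
    have hσηS : σ * η ∈ H ⊓ K :=
      Subgroup.mem_inf.mpr ⟨mul_mem (Subgroup.mem_inf.mp hσ).1 hη,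
        mul_mem (Subgroup.mem_inf.mp hσ).2 hηK⟩
    have hj'K : j' ∈ K := hI₂ hj'
    have e1 : j = r₂ j' := hu₂ j' hj'K j ⟨hj, σ * η, hσηS, by rw [heq]; group⟩
    have e2 : j' = r₂ j' := hu₂ j' hj'K j' ⟨hj', 1, one_mem _, (mul_one _).symm⟩
    rw [e2, ← e1]
  -- r₁ and r₂ are mutually inverse on representatives
  have r₁r₂ : ∀ k ∈ K, r₁ (r₂ (r₁ k)) = r₁ k := by
    intro k hk
    have hik : r₁ k ∈ K := hI₁ (hmem₁ k hk)
    have : r₁ k = r₂ (r₁ k) * ((r₂ (r₁ k))⁻¹ * r₁ k) := by group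
    exact (hu₁ (r₂ (r₁ k)) (hI₂ (hmem₂ (r₁ k) hik)) (r₁ k)
      ⟨hmem₁ k hk, ((r₁ k)⁻¹ * r₂ (r₁ k)),
        by simpa using inv_mem (hS₂ (r₁ k) hik), by group⟩).symm
  have r₂r₁ : ∀ k ∈ K, r₂ (r₁ (r₂ k)) = r₂ k := by
    intro k hk
    have hik : r₂ k ∈ K := hI₂ (hmem₂ k hk)
    exact (hu₂ (r₁ (r₂ k)) (hI₁ (hmem₁ (r₂ k) hik)) (r₂ k)
      ⟨hmem₂ k hk, ((r₂ k)⁻¹ * r₁ (r₂ k)),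
        by simpa using inv_mem (hS₁ (r₂ k) hik), by group⟩).symm
  -- the conjugating map and its inverse
  set φ : G → G := fun x => if x ∈ K then r₂ (r₁ x) * ((r₁ x)⁻¹ * x) else x with hφdef
  set ψ : G → G := fun x => if x ∈ K then r₁ (r₂ x) * ((r₂ x)⁻¹ * x) else x with hψdef
  have hφ : ∀ k ∈ K, φ k = r₂ (r₁ k) * ((r₁ k)⁻¹ * k) := by
    intro k hk; simp [hφdef, hk]
  have hψ : ∀ k ∈ K, ψ k = r₁ (r₂ k) * ((r₂ k)⁻¹ * k) := by
    intro k hk; simp [hψdef, hk]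
  have hφK : ∀ k ∈ K, φ k ∈ K := by
    intro k hk
    rw [hφ k hk]
    exact mul_mem (hI₂ (hmem₂ (r₁ k) (hI₁ (hmem₁ k hk))))
      (Subgroup.mem_inf.mp (hS₁ k hk)).2
  have hψK : ∀ k ∈ K, ψ k ∈ K := by
    intro k hk
    rw [hψ k hk]
    exact mul_mem (hI₁ (hmem₁ (r₂ k) (hI₂ (hmem₂ k hk))))
      (Subgroup.mem_inf.mp (hS₂ k hk)).2
  have hψφ : ∀ k ∈ K, ψ (φ k) = k := by
    intro k hk
    have hik : r₁ k ∈ K := hI₁ (hmem₁ k hk)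
    have h1 : r₂ (φ k) = r₂ (r₁ k) := by
      rw [hφ k hk]
      exact rep₂ _ (hmem₂ (r₁ k) hik) _ (hS₁ k hk)
    rw [hψ (φ k) (hφK k hk), h1, r₁r₂ k hk, hφ k hk]
    group
  have hφψ : ∀ k ∈ K, φ (ψ k) = k := by
    intro k hk
    have hik : r₂ k ∈ K := hI₂ (hmem₂ k hk)
    have h1 : r₁ (ψ k) = r₁ (r₂ k) := by
      rw [hψ k hk]
      exact rep₁ _ (hmem₁ (r₂ k) hik) _ (hS₂ k hk)
    rw [hφ (ψ k) (hψK k hk), h1, r₂r₁ k hk, hψ k hk]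
    group
  refine ⟨φ, Set.InvOn.bijOn ⟨hψφ, hφψ⟩ hφK hψK, ?_⟩
  intro h hh k hk
  -- write k = i * s with i ∈ I₁, s ∈ S
  set i := r₁ k with hi
  set s := (r₁ k)⁻¹ * k with hs
  have hiI : i ∈ I₁ := hmem₁ k hk
  have hiK : i ∈ K := hI₁ hiI
  have hsS : s ∈ H ⊓ K := hS₁ k hk
  have hk' : k = i * s := by rw [hi, hs]; group
  obtain ⟨j, hjI, hfj, s', hs', h', hh', hact⟩ := hf₁ h hh i hiI s hsS
  -- compute the left-hand side
  have hjsK : j * s ∈ K := mul_mem (hI₁ hjI) (Subgroup.mem_inf.mp hsS).2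
  have lhs_eq : φ (f₁ h k) = r₂ j * s := by
    rw [hk', hfj, hφ (j * s) hjsK, rep₁ j hjI s hsS]
    group
  -- compute the right-hand side
  have hriK : r₂ i ∈ K := hI₂ (hmem₂ i hiK)
  have hφk : φ k = r₂ i * s := by rw [hφ k hk, ← hi, ← hs]
  obtain ⟨j₂, hj₂I, hfj₂, s₂', hs₂', h₂', hh₂', hact₂⟩ :=
    hf₂ h hh (r₂ i) (hmem₂ i hiK) s hsS
  -- decompositions of i and j by their I₂-representatives
  obtain ⟨s₀, hs₀, hi₀⟩ := (hr₂ i hiK).2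
  obtain ⟨t₀, ht₀, hj₀⟩ := (hr₂ j (hI₁ hjI)).2
  -- show j₂ = r₂ j via the cross lemma
  have key : j₂ = r₂ j := by
    have hσ : t₀ * s' ∈ H ⊓ K := mul_mem ht₀ hs'
    have hη : h' * s₀⁻¹ * h₂'⁻¹ * s₂'⁻¹ ∈ H :=
      mul_mem (mul_mem (mul_mem hh' (inv_mem (Subgroup.mem_inf.mp hs₀).1))
        (inv_mem hh₂')) (inv_mem (Subgroup.mem_inf.mp hs₂').1)
    refine cross₂ (r₂ j) (hmem₂ j (hI₁ hjI)) j₂ hj₂I (t₀ * s') hσ _ hη ?_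
    -- from h * i = j * s' * h' and i = r₂ i * s₀, j = r₂ j * t₀,
    -- and h * r₂ i = j₂ * s₂' * h₂'
    have hri : r₂ i = i * s₀⁻¹ := eq_mul_inv_iff_mul_eq.mpr hi₀.symm
    have hrj : r₂ j = j * t₀⁻¹ := eq_mul_inv_iff_mul_eq.mpr hj₀.symm
    have e1 : h * (r₂ i) = j * s' * (h' * s₀⁻¹) := by
      calc h * (r₂ i) = h * (i * s₀⁻¹) := by rw [hri]
        _ = h * i * s₀⁻¹ := by group
        _ = j * s' * h' * s₀⁻¹ := by rw [hact]
        _ = j * s' * (h' * s₀⁻¹) := by group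
    have e2 : j₂ * s₂' * h₂' = r₂ j * (t₀ * s') * (h' * s₀⁻¹) := by
      rw [← hact₂, e1, hrj]; group
    have e3 : j₂ = j₂ * s₂' * h₂' * h₂'⁻¹ * s₂'⁻¹ := by group
    rw [e3, e2]; group
  rw [lhs_eq, hφk, hfj₂, key]
end

section
/- Let G = HK, S = H ∩ K, I a transversal of K/S, ▷'_I the extended action of H on K, and for h ∈ H, k ∈ K set k'_I(k,h) := (h ▷'_I k)⁻¹ · k (an element of G). Then k'_I(k,h) ∈ G satisfies the cocycle identity: for all h, h' ∈ H and k' ∈ K, k'_I(h' ▷'_I k', h) · k'_I(k', h') = k'_I(k', h·h'). -/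
/-- The cocycle identity for `k'_I(k,h) = (h ▷'_I k)⁻¹ · k`. -/
theorem stmt_9 {G : Type*} [Group G] (H K : Subgroup G)
    (hHK : ∀ g : G, ∃ h ∈ H, ∃ k ∈ K, g = h * k)
    (I : Set G) (hI : I ⊆ ↑K)
    (htrans : ∀ k ∈ K, ∃! i, i ∈ I ∧ ∃ s ∈ H ⊓ K, k = i * s)
    (f : G → G → G)
    (hf : ∀ h ∈ H, ∀ i ∈ I, ∀ s ∈ H ⊓ K,
      ∃ j ∈ I, f h (i * s) = j * s ∧ ∃ s' ∈ H ⊓ K, ∃ h' ∈ H, h * i = j * s' * h') :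
    ∀ h ∈ H, ∀ h' ∈ H, ∀ k' ∈ K,
      ((f h (f h' k'))⁻¹ * (f h' k')) * ((f h' k')⁻¹ * k') = (f (h * h') k')⁻¹ * k' := by
  -- key uniqueness: if i1 * a = i2 * b with i1,i2 ∈ I, a,b ∈ H, then i1 = i2
  have key : ∀ i1 ∈ I, ∀ i2 ∈ I, ∀ a ∈ H, ∀ b ∈ H, i1 * a = i2 * b → i1 = i2 := by
    intro i1 hi1 i2 hi2 a ha b hb heq
    have hi1K : i1 ∈ K := hI hi1
    have hi2K : i2 ∈ K := hI hi2
    have hsH : i2⁻¹ * i1 ∈ H := by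
      have : i2⁻¹ * i1 = b * a⁻¹ := by
        have h' : i1 = i2 * b * a⁻¹ := by rw [← heq]; group
        rw [h']; group
      rw [this]; exact mul_mem hb (inv_mem ha)
    have hsK : i2⁻¹ * i1 ∈ K := mul_mem (inv_mem hi2K) hi1K
    obtain ⟨c, -, hu⟩ := htrans i1 hi1K
    have h1 : i1 = c := hu i1 ⟨hi1, 1, one_mem _, by group⟩
    have h2 : i2 = c := hu i2 ⟨hi2, i2⁻¹ * i1, Subgroup.mem_inf.mpr ⟨hsH, hsK⟩, by group⟩
    rw [h1, h2]
  intro h hh h' hh' k' hk'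
  obtain ⟨i, ⟨hiI, s, hs, hks⟩, -⟩ := htrans k' hk'
  obtain ⟨j, hjI, hfj, s1, hs1, h1, hh1, heq1⟩ := hf h' hh' i hiI s hs
  obtain ⟨m, hmI, hfm, s2, hs2, h2, hh2, heq2⟩ := hf h hh j hjI s hs
  obtain ⟨n, hnI, hfn, s3, hs3, h3, hh3, heq3⟩ := hf (h * h') (mul_mem hh hh') i hiI s hs
  have hmn : m = n := by
    apply key m hmI n hnI (s2 * h2 * s1 * h1) ?_ (s3 * h3) ?_
    · have : m * (s2 * h2 * s1 * h1) = h * h' * i := by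
        calc m * (s2 * h2 * s1 * h1) = (m * s2 * h2) * (s1 * h1) := by group
        _ = (h * j) * (s1 * h1) := by rw [← heq2]
        _ = h * (j * s1 * h1) := by group
        _ = h * (h' * i) := by rw [← heq1]
        _ = h * h' * i := by group
      rw [this, heq3]; group
    · exact mul_mem (mul_mem (mul_mem (Subgroup.mem_inf.mp hs2).1 hh2)
        (Subgroup.mem_inf.mp hs1).1) hh1
    · exact mul_mem (Subgroup.mem_inf.mp hs3).1 hh3
  rw [hks, hfj, hfm, hfn, hmn]
  group
end
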